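/- Let Q be a measurable space and T a Markov kernel from Q to Q. Let R : Q → ℝ be measurable with 0 ≤ R(y) ≤ R_max for all y, let γ ∈ [0,1] and N ∈ ℕ, and define V_N(y) = R(y), V_i(y) = R(y) + γ ∫ V_{i+1}(y') (T y)(dy') for 0 ≤ i < N. Let I be a finite type with a distinguished element 'abs', and let (C_i)_{i∈I} be pairwise disjoint measurable subsets of Q whose union is Q. Let P̌, P̂ : I × I → [0,1] satisfy: (i) for every i ≠ abs, every j ∈ I, and every y ∈ C_i, P̌(i,j) ≤ (T y)(C_j) ≤ P̂(i,j); (ii) P̌(abs,abs) = P̂(abs,abs) = 1 and P̌(abs,j) = P̂(abs,j) = 0 for all j ≠ abs. Call π : ℕ → I → I → ℝ an adversary if for each t ∈ ℕ and i ∈ I, π(t,i,·) is a probability mass function on I with P̌(i,j) ≤ π(t,i,j) ≤ P̂(i,j) for all j. Suppose there is a measurable set N₀ ⊆ C_abs with (T y)(N₀) = 0 for every y ∈ Q, and let Ř : I → ℝ satisfy 0 ≤ Ř(i), Ř(i) ≤ R(y) for every i ≠ abs and y ∈ C_i, and Ř(abs) ≤ R(y) for every y ∈ Q \ N₀. For an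 adversary π define V̌_{π,N}(i) = Ř(i) and V̌_{π,t}(i) = Ř(i) + γ · Σ_{j∈I} V̌_{π,t+1}(j) · π(t,i,j) for 0 ≤ t < N. Then for every i₀ ≠ abs and every y₀ ∈ C_{i₀}: inf over adversaries π of V̌_{π,0}(i₀) ≤ V_0(y₀). -/

import Mathlib

/-!
Let `π` be the adversary that, at every step and in every state, picks an admissible row
minimising the expected value of the next step; it exists because the admissible rows form a
compact set. Backward induction on `t` gives `advVal π t i ≤ V t y` for every point `y` that the
state `i` represents. For a non-absorbing `i` and `y ∈ C i` the row `j ↦ (T y)(C j)` is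
admissible, so `π` does at most as well with it, and integrating the induction hypothesis cell
by cell bounds `∑ j, advVal π (t+1) j * (T y)(C j)` by `∫ V (t+1) d(T y)`. The absorbing row is
forced to be the point mass at `abs`, and `T y`-almost every point lies outside `N₀`, where the
value of `abs` is a lower bound.
-/

open MeasureTheory ProbabilityTheory

/-- An adversary of the interval Markov chain with transition probability bounds
`Pl, Pu : I → I → ℝ`: at each time `t` and state `i` it chooses a probability mass function
`π t i` on `I` lying between the bounds. -/
def IsAdversary {I : Type*} [Fintype I] (Pl Pu : I → I → ℝ) (π : ℕ → I → I → ℝ) : Prop :=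
  ∀ (t : ℕ) (i : I),
    (∀ j, 0 ≤ π t i j) ∧ (∑ j, π t i j = 1) ∧ (∀ j, Pl i j ≤ π t i j ∧ π t i j ≤ Pu i j)

/-- Backward value iteration for cumulative discounted rewards on the interval Markov chain,
under adversary `π`, with horizon `N`, discount `γ` and state reward `Rew`:
`advVal N γ Rew π N i = Rew i` and
`advVal N γ Rew π t i = Rew i + γ * Σ_j advVal N γ Rew π (t+1) j * π t i j` for `t < N`. -/
noncomputable def advVal {I : Type*} [Fintype I] (N : ℕ) (γ : ℝ) (Rew : I → ℝ)
    (π : ℕ → I → I → ℝ) (t : ℕ) (i : I) : ℝ :=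
  if h : t < N then Rew i + γ * ∑ j, advVal N γ Rew π (t + 1) j * π t i j
  else Rew i
termination_by N - t
decreasing_by omega


section Partition

variable {Ω ι : Type*} [MeasurableSpace Ω] [Fintype ι] {μ : Measure Ω} {C : ι → Set Ω}

theorem sum_mul_measureReal_le_integral_of_partition [IsFiniteMeasure μ]
    (hCmeas : ∀ j, MeasurableSet (C j)) (hCdisj : Pairwise (Function.onFun Disjoint C))
    (hCunion : ⋃ j, C j = Set.univ) {f : Ω → ℝ} (hf : Integrable f μ) {a : ι → ℝ}
    (ha : ∀ᵐ x ∂μ, ∀ j, x ∈ C j → a j ≤ f x) :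
    ∑ j, a j * μ.real (C j) ≤ ∫ x, f x ∂μ := by
  calc ∑ j, a j * μ.real (C j) = ∑ j, ∫ _ in C j, a j ∂μ := by simp [mul_comm]
    _ ≤ ∑ j, ∫ x in C j, f x ∂μ := Finset.sum_le_sum fun j _ =>
        setIntegral_mono_on_ae (integrableOn_const (measure_ne_top μ _)) hf.integrableOn
          (hCmeas j) (ha.mono fun x hx => hx j)
    _ = ∫ x, f x ∂μ := by
        rw [← integral_iUnion_fintype hCmeas hCdisj fun _ => hf.integrableOn, hCunion,
          setIntegral_univ]

theorem sum_measureReal_eq_one_of_partition [IsProbabilityMeasure μ]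
    (hCmeas : ∀ j, MeasurableSet (C j)) (hCdisj : Pairwise (Function.onFun Disjoint C))
    (hCunion : ⋃ j, C j = Set.univ) :
    ∑ j, μ.real (C j) = 1 := by
  rw [← measureReal_iUnion_fintype hCdisj hCmeas, hCunion, probReal_univ]

end Partition

theorem measurable_nonneg_bounded_of_bellman {Q : Type*} [MeasurableSpace Q] (T : Kernel Q Q)
    [IsMarkovKernel T] {R : Q → ℝ} (hRmeas : Measurable R) {Rmax : ℝ}
    (hR : ∀ y, R y ∈ Set.Icc 0 Rmax) {γ : ℝ} (hγ : 0 ≤ γ) {N : ℕ} {V : ℕ → Q → ℝ}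
    (hVN : ∀ y, V N y = R y)
    (hVi : ∀ i < N, ∀ y, V i y = R y + γ * ∫ y', V (i + 1) y' ∂(T y)) {t : ℕ} (ht : t ≤ N) :
    Measurable (V t) ∧ ∃ B, ∀ y, V t y ∈ Set.Icc 0 B := by
  induction ht using Nat.decreasingInduction with
  | self => exact ⟨funext hVN ▸ hRmeas, Rmax, fun y => hVN y ▸ hR y⟩
  | of_succ t ht ih =>
    obtain ⟨hmeas, B, hB⟩ := ih
    have hint (y : Q) : Integrable (V (t + 1)) (T y) :=
      .of_mem_Icc 0 B hmeas.aemeasurable (ae_of_all _ hB)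
    have hbound : ∀ y, ∫ y', V (t + 1) y' ∂(T y) ∈ Set.Icc 0 B := fun y =>
      ⟨integral_nonneg fun y' => (hB y').1, by
        simpa using integral_mono (hint y) (integrable_const B) fun y' => (hB y').2⟩
    refine ⟨?_, Rmax + γ * B, fun y => ?_⟩
    · rw [funext (hVi t ht)]
      exact hRmeas.add (measurable_const.mul
        (hmeas.comp measurable_snd).stronglyMeasurable.integral_kernel_prod_right'.measurable)
    · rw [hVi t ht y]
      obtain ⟨hR0, hRmax⟩ := hR y
      obtain ⟨hI0, hIB⟩ := hbound y
      exact ⟨by positivity, by gcongr⟩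

section Rows

variable {I : Type*} [Fintype I]

def admissibleRows (Pl Pu : I → I → ℝ) (i : I) : Set (I → ℝ) :=
  {p | (∀ j, 0 ≤ p j) ∧ (∑ j, p j = 1) ∧ (∀ j, Pl i j ≤ p j ∧ p j ≤ Pu i j)}

theorem isCompact_admissibleRows (Pl Pu : I → I → ℝ) (i : I) :
    IsCompact (admissibleRows Pl Pu i) := by
  refine (isCompact_Icc (a := Pl i) (b := Pu i)).of_isClosed_subset ?_
    fun p hp => ⟨fun j => (hp.2.2 j).1, fun j => (hp.2.2 j).2⟩
  simp only [admissibleRows, Set.ofPred_and, Set.ofPred_forall]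
  exact (isClosed_iInter fun j => isClosed_le continuous_const (continuous_apply j)).inter
    ((isClosed_eq (by fun_prop) continuous_const).inter (isClosed_iInter fun j =>
      (isClosed_le continuous_const (continuous_apply j)).inter
        (isClosed_le (continuous_apply j) continuous_const)))

theorem measureReal_partition_mem_admissibleRows {Q : Type*} [MeasurableSpace Q]
    {μ : Measure Q} [IsProbabilityMeasure μ] {C : I → Set Q}
    (hCmeas : ∀ j, MeasurableSet (C j)) (hCdisj : Pairwise (Function.onFun Disjoint C))
    (hCunion : ⋃ j, C j = Set.univ) {Pl Pu : I → I → ℝ} {i : I}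
    (hbounds : ∀ j, Pl i j ≤ μ.real (C j) ∧ μ.real (C j) ≤ Pu i j) :
    (fun j => μ.real (C j)) ∈ admissibleRows Pl Pu i :=
  ⟨fun _ => measureReal_nonneg, sum_measureReal_eq_one_of_partition hCmeas hCdisj hCunion,
    hbounds⟩

theorem sum_mul_eq_of_mem_admissibleRows_of_upper_eq_zero {Pl Pu : I → I → ℝ} {i : I}
    (hPu : ∀ j, j ≠ i → Pu i j = 0) {p : I → ℝ} (hp : p ∈ admissibleRows Pl Pu i)
    (a : I → ℝ) : ∑ j, a j * p j = a i := by
  have hp0 : ∀ j, j ≠ i → p j = 0 := fun j hj =>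
    le_antisymm ((hp.2.2 j).2.trans_eq (hPu j hj)) (hp.1 j)
  have hpi : p i = 1 := by
    rw [← hp.2.1, Finset.sum_eq_single i (fun j _ hj => hp0 j hj) (by simp)]
  rw [Finset.sum_eq_single i (fun j _ hj => by rw [hp0 j hj, mul_zero]) (by simp), hpi,
    mul_one]

end Rows

theorem advVal_of_lt {I : Type*} [Fintype I] {N : ℕ} {γ : ℝ} {Rew : I → ℝ}
    {π : ℕ → I → I → ℝ} {t : ℕ} (ht : t < N) (i : I) :
    advVal N γ Rew π t i = Rew i + γ * ∑ j, advVal N γ Rew π (t + 1) j * π t i j := by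
  rw [advVal, dif_pos ht]

theorem advVal_of_le {I : Type*} [Fintype I] {N : ℕ} {γ : ℝ} {Rew : I → ℝ}
    {π : ℕ → I → I → ℝ} {t : ℕ} (ht : N ≤ t) (i : I) : advVal N γ Rew π t i = Rew i := by
  rw [advVal, dif_neg (not_lt.2 ht)]

theorem advVal_nonneg {I : Type*} [Fintype I] (N : ℕ) {γ : ℝ} (hγ : 0 ≤ γ) {Rew : I → ℝ}
    (hRew : ∀ i, 0 ≤ Rew i) {π : ℕ → I → I → ℝ} (hπ : ∀ t i j, 0 ≤ π t i j) (t : ℕ) (i : I) :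
    0 ≤ advVal N γ Rew π t i := by
  rcases lt_or_ge t N with ht | ht
  · rw [advVal_of_lt ht]
    exact add_nonneg (hRew i) (mul_nonneg hγ (Finset.sum_nonneg fun j _ =>
      mul_nonneg (advVal_nonneg N hγ hRew hπ (t + 1) j) (hπ t i j)))
  · rw [advVal_of_le ht]
    exact hRew i
termination_by N - t

section Greedy

variable {I : Type*} [Fintype I] (N : ℕ) (γ : ℝ) (Rew : I → ℝ) (sel : I → (I → ℝ) → I → ℝ)

/-- Indexed by the number of steps to go; `sel i a` is the row chosen in state `i` when `a` is
the value of the next step. -/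
def greedyValue : ℕ → I → ℝ
  | 0 => Rew
  | k + 1 => fun i => Rew i + γ * ∑ j, greedyValue k j * sel i (greedyValue k) j

def greedyAdversary (t : ℕ) (i : I) : I → ℝ :=
  sel i (greedyValue γ Rew sel (N - (t + 1)))

theorem advVal_greedyAdversary {t : ℕ} (ht : t ≤ N) :
    advVal N γ Rew (greedyAdversary N γ Rew sel) t = greedyValue γ Rew sel (N - t) := by
  induction ht using Nat.decreasingInduction with
  | self => funext i; rw [advVal_of_le le_rfl, Nat.sub_self, greedyValue]
  | of_succ t ht ih =>
    funext i
    rw [advVal_of_lt ht, ih, show N - t = N - (t + 1) + 1 by omega, greedyValue,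
      greedyAdversary]

end Greedy

theorem exists_adversary_minimizing_expected_value {I : Type*} [Fintype I] (Pl Pu : I → I → ℝ)
    (hne : ∀ i, (admissibleRows Pl Pu i).Nonempty) (N : ℕ) (γ : ℝ) (Rew : I → ℝ) :
    ∃ π, IsAdversary Pl Pu π ∧ ∀ t < N, ∀ i, ∀ q ∈ admissibleRows Pl Pu i,
      ∑ j, advVal N γ Rew π (t + 1) j * π t i j ≤ ∑ j, advVal N γ Rew π (t + 1) j * q j := by
  choose sel hsel hmin using fun i (a : I → ℝ) =>
    (isCompact_admissibleRows Pl Pu i).exists_isMinOn (hne i)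
      (f := fun q => ∑ j, a j * q j) (by fun_prop)
  refine ⟨greedyAdversary N γ Rew sel, fun t i => hsel i _, fun t ht i q hq => ?_⟩
  rw [advVal_greedyAdversary N γ Rew sel ht]
  exact hmin i _ hq

/-- The absorbing state stands for every point outside the null set `N₀`, not only for its cell:
this is where its reward `Rl abs` bounds `R` from below. -/
def effectiveCell {Q I : Type*} (abs : I) (C : I → Set Q) (N₀ : Set Q) (i : I) : Set Q :=
  {y | (i ≠ abs ∧ y ∈ C i) ∨ (i = abs ∧ y ∉ N₀)}

theorem mem_effectiveCell_of_mem_of_notMem {Q I : Type*} {abs : I} {C : I → Set Q}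
    {N₀ : Set Q} {i : I} {y : Q} (hC : y ∈ C i) (hN₀ : y ∉ N₀) :
    y ∈ effectiveCell abs C N₀ i := by
  by_cases hi : i = abs
  · exact Or.inr ⟨hi, hN₀⟩
  · exact Or.inl ⟨hi, hC⟩

theorem advVal_le_value_of_minimizing {Q : Type*} [MeasurableSpace Q] (T : Kernel Q Q)
    [IsMarkovKernel T] (R : Q → ℝ) {γ : ℝ} (hγ : 0 ≤ γ) {N : ℕ} {V : ℕ → Q → ℝ}
    (hVN : ∀ y, V N y = R y)
    (hVi : ∀ i < N, ∀ y, V i y = R y + γ * ∫ y', V (i + 1) y' ∂(T y))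
    (hVint : ∀ t ≤ N, ∀ y, Integrable (V t) (T y))
    {I : Type*} [Fintype I] {abs : I} {C : I → Set Q} (hCmeas : ∀ i, MeasurableSet (C i))
    (hCdisj : Pairwise (Function.onFun Disjoint C)) (hCunion : ⋃ i, C i = Set.univ)
    {Pl Pu : I → I → ℝ} (hbounds : ∀ i, i ≠ abs → ∀ j, ∀ y ∈ C i,
      Pl i j ≤ (T y).real (C j) ∧ (T y).real (C j) ≤ Pu i j)
    (habs0 : ∀ j, j ≠ abs → Pu abs j = 0)
    {N₀ : Set Q} (hN₀null : ∀ y, T y N₀ = 0)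
    {Rl : I → ℝ} (hRl : ∀ i, ∀ y ∈ effectiveCell abs C N₀ i, Rl i ≤ R y)
    {π : ℕ → I → I → ℝ} (hπ : IsAdversary Pl Pu π)
    (hmin : ∀ t < N, ∀ i, ∀ q ∈ admissibleRows Pl Pu i,
      ∑ j, advVal N γ Rl π (t + 1) j * π t i j ≤ ∑ j, advVal N γ Rl π (t + 1) j * q j)
    {t : ℕ} (ht : t ≤ N) :
    ∀ i, ∀ y ∈ effectiveCell abs C N₀ i, advVal N γ Rl π t i ≤ V t y := by
  induction ht using Nat.decreasingInduction with
  | self => intro i y hy; rw [advVal_of_le le_rfl, hVN]; exact hRl i y hy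
  | of_succ t ht ih =>
    intro i y hy
    rw [advVal_of_lt ht, hVi t ht y]
    gcongr ?_ + γ * ?_
    · exact hRl i y hy
    set A := fun j => advVal N γ Rl π (t + 1) j
    have hnull : ∀ᵐ y' ∂(T y), y' ∉ N₀ := measure_eq_zero_iff_ae_notMem.mp (hN₀null y)
    by_cases hi : i = abs
    · subst hi
      rw [sum_mul_eq_of_mem_admissibleRows_of_upper_eq_zero habs0 (hπ t i) A]
      calc A i = ∫ _, A i ∂(T y) := by simp
        _ ≤ ∫ y', V (t + 1) y' ∂(T y) := integral_mono_ae (integrable_const _)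
          (hVint _ ht y) (hnull.mono fun y' hy' => ih i y' (Or.inr ⟨rfl, hy'⟩))
    · have hy : y ∈ C i := by simpa [effectiveCell, hi] using hy
      calc ∑ j, A j * π t i j ≤ ∑ j, A j * (T y).real (C j) :=
            hmin t ht i _ (measureReal_partition_mem_admissibleRows hCmeas hCdisj hCunion
              (hbounds i hi · y hy))
        _ ≤ ∫ y', V (t + 1) y' ∂(T y) :=
            sum_mul_measureReal_le_integral_of_partition hCmeas hCdisj hCunion (hVint _ ht y)
              (hnull.mono fun y' hy' j hj => ih j y' (mem_effectiveCell_of_mem_of_notMem hj hy'))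

theorem imc_inf_le_value_cumulative_general
    {Q : Type*} [MeasurableSpace Q] (T : Kernel Q Q) [IsMarkovKernel T]
    (Rmax : ℝ) (R : Q → ℝ) (hRmeas : Measurable R) (hR : ∀ y, R y ∈ Set.Icc 0 Rmax)
    (γ : ℝ) (hγ : γ ∈ Set.Icc (0 : ℝ) 1) (N : ℕ)
    (V : ℕ → Q → ℝ)
    (hVN : ∀ y, V N y = R y)
    (hVi : ∀ i < N, ∀ y, V i y = R y + γ * ∫ y', V (i + 1) y' ∂(T y))
    {I : Type*} [Fintype I] (abs : I)
    (C : I → Set Q) (hCmeas : ∀ i, MeasurableSet (C i))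
    (hCdisj : Pairwise (Function.onFun Disjoint C))
    (hCunion : ⋃ i, C i = Set.univ)
    (Pl Pu : I → I → ℝ)
    (hbounds : ∀ i, i ≠ abs → ∀ j, ∀ y ∈ C i,
      Pl i j ≤ (T y (C j)).toReal ∧ (T y (C j)).toReal ≤ Pu i j)
    (habs0 : ∀ j, j ≠ abs → Pl abs j = 0 ∧ Pu abs j = 0)
    (N₀ : Set Q)
    (hN₀null : ∀ y, T y N₀ = 0)
    (Rl : I → ℝ) (hRl0 : ∀ i, 0 ≤ Rl i)
    (hRlC : ∀ i, i ≠ abs → ∀ y ∈ C i, Rl i ≤ R y)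
    (hRlabs : ∀ y, y ∉ N₀ → Rl abs ≤ R y)
    (i₀ : I) (hi₀ : i₀ ≠ abs) (y₀ : Q) (hy₀ : y₀ ∈ C i₀) :
    sInf ((fun π => advVal N γ Rl π 0 i₀) '' {π | IsAdversary Pl Pu π}) ≤ V 0 y₀ := by
  have hV (t : ℕ) (ht : t ≤ N) :=
    measurable_nonneg_bounded_of_bellman T hRmeas hR hγ.1 hVN hVi ht
  rcases Set.eq_empty_or_nonempty {π | IsAdversary Pl Pu π} with hempty | ⟨π₀, hπ₀⟩
  · obtain ⟨-, B, hB⟩ := hV 0 N.zero_le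
    rw [hempty, Set.image_empty, Real.sInf_empty]
    exact (hB y₀).1
  obtain ⟨π, hπ, hmin⟩ :=
    exists_adversary_minimizing_expected_value Pl Pu (fun i => ⟨π₀ 0 i, hπ₀ 0 i⟩) N γ Rl
  have hVint (t : ℕ) (ht : t ≤ N) (y : Q) : Integrable (V t) (T y) := by
    obtain ⟨hmeas, B, hB⟩ := hV t ht
    exact .of_mem_Icc 0 B hmeas.aemeasurable (ae_of_all _ hB)
  have hRl (i : I) (y : Q) (hy : y ∈ effectiveCell abs C N₀ i) : Rl i ≤ R y := by
    rcases hy with ⟨hi, hy⟩ | ⟨rfl, hy⟩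
    exacts [hRlC i hi y hy, hRlabs y hy]
  have hbdd : BddBelow ((fun π => advVal N γ Rl π 0 i₀) '' {π | IsAdversary Pl Pu π}) := by
    refine ⟨0, ?_⟩
    rintro _ ⟨π', hπ', rfl⟩
    exact advVal_nonneg N hγ.1 hRl0 (fun t i => (hπ' t i).1) 0 i₀
  calc sInf _ ≤ advVal N γ Rl π 0 i₀ := csInf_le hbdd ⟨π, hπ, rfl⟩
    _ ≤ V 0 y₀ := advVal_le_value_of_minimizing T R hγ.1 hVN hVi hVint hCmeas hCdisj hCunion
      hbounds (fun j hj => (habs0 j hj).2) hN₀null hRl hπ hmin N.zero_le i₀ y₀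
      (Or.inl ⟨hi₀, hy₀⟩)

/-- lower-bound half of Theorem 1 of the paper, for cumulative discounted
rewards. The infimum over adversaries of the IMC value function with lower rewards `Rl`
lower-bounds the value function `V` of the Markov kernel `T`, for every starting cell
`i₀ ≠ abs` and every point `y₀` in that cell. -/
theorem imc_inf_le_value_cumulative
    {Q : Type*} [MeasurableSpace Q] (T : Kernel Q Q) [IsMarkovKernel T]
    (Rmax : ℝ) (R : Q → ℝ) (hRmeas : Measurable R) (hR : ∀ y, R y ∈ Set.Icc 0 Rmax)
    (γ : ℝ) (hγ : γ ∈ Set.Icc (0 : ℝ) 1) (N : ℕ)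
    (V : ℕ → Q → ℝ)
    (hVN : ∀ y, V N y = R y)
    (hVi : ∀ i < N, ∀ y, V i y = R y + γ * ∫ y', V (i + 1) y' ∂(T y))
    {I : Type*} [Fintype I] (abs : I)
    (C : I → Set Q) (hCmeas : ∀ i, MeasurableSet (C i))
    (hCdisj : Pairwise (Function.onFun Disjoint C))
    (hCunion : ⋃ i, C i = Set.univ)
    (Pl Pu : I → I → ℝ)
    (hPl : ∀ i j, Pl i j ∈ Set.Icc (0 : ℝ) 1) (hPu : ∀ i j, Pu i j ∈ Set.Icc (0 : ℝ) 1)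
    (hbounds : ∀ i, i ≠ abs → ∀ j, ∀ y ∈ C i,
      Pl i j ≤ (T y (C j)).toReal ∧ (T y (C j)).toReal ≤ Pu i j)
    (habs1 : Pl abs abs = 1 ∧ Pu abs abs = 1)
    (habs0 : ∀ j, j ≠ abs → Pl abs j = 0 ∧ Pu abs j = 0)
    (N₀ : Set Q) (hN₀meas : MeasurableSet N₀) (hN₀sub : N₀ ⊆ C abs)
    (hN₀null : ∀ y, T y N₀ = 0)
    (Rl : I → ℝ) (hRl0 : ∀ i, 0 ≤ Rl i)
    (hRlC : ∀ i, i ≠ abs → ∀ y ∈ C i, Rl i ≤ R y)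
    (hRlabs : ∀ y, y ∉ N₀ → Rl abs ≤ R y)
    (i₀ : I) (hi₀ : i₀ ≠ abs) (y₀ : Q) (hy₀ : y₀ ∈ C i₀) :
    sInf ((fun π => advVal N γ Rl π 0 i₀) '' {π | IsAdversary Pl Pu π}) ≤ V 0 y₀ :=
  imc_inf_le_value_cumulative_general T Rmax R hRmeas hR γ hγ N V hVN hVi abs C hCmeas hCdisj
    hCunion Pl Pu hbounds habs0 N₀ hN₀null Rl hRl0 hRlC hRlabs i₀ hi₀ y₀ hy₀
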